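/- For all integers n ≥ 1, 0 ≤ k ≤ n, k+1 < i ≤ n, and every permutation σ of {0,…,k}, one has the equality of linear maps R^{n+1} → R^{n+1} × R^2: sd_{n,k}^σ ∘ ∂_i = (∂_{i−1} × id_{R^2}) ∘ sd_{n−1,k}^σ, where ∂_i : R^{n+1} → R^{n+2} and ∂_{i−1} : R^n → R^{n+1} are face maps and sd_{n−1,k}^σ : R^{n+1} → R^n × R^2 is the homotopy map in dimension n−1 formed with respect to the same family of centers. -/
import Mathlib


/-!  Subdivision of simplices, modeled linearly.

The algebraic `n`-simplex over a commutative ring `R` is modeled by the hyperplane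
`{t ∈ R^{n+1} : ∑ t_j = 1}` inside the free module `R^{n+1} = (Fin (n+1) → R)`; its vertices
are the standard basis vectors, and affine-linear maps of simplices are extended to the linear
maps of the ambient free modules determined by the images of the vertices. -/

/-- The linear map `R^a → M` sending the `j`-th standard basis vector to `v j`. -/
noncomputable def ofVecs {R : Type*} [CommRing R] {a : ℕ} {M : Type*} [AddCommGroup M]
    [Module R M] (v : Fin a → M) : (Fin a → R) →ₗ[R] M where
  toFun t := ∑ j, t j • v j
  map_add' t s := by simp [add_smul, Finset.sum_add_distrib]
  map_smul' r t := by simp [smul_smul, Finset.smul_sum]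

/-- The face map `∂_i : R^a → R^{a+1}`, sending `e_j` to `e_j` for `j < i` and to `e_{j+1}`
for `j ≥ i`. -/
noncomputable def face (R : Type*) [CommRing R] (a : ℕ) (i : Fin (a + 1)) :
    (Fin a → R) →ₗ[R] (Fin (a + 1) → R) :=
  ofVecs fun j => Pi.single (i.succAbove j) 1

/-- Given centers `c^s ∈ R^{s+1}` and a nonempty subset `S ⊆ {0,…,n}` with `s+1` elements,
`cS c S = i_S (c^s) ∈ R^{n+1}` is the image of `c^s` under the linear map `i_S` sending `e_j`
to `e_{σ_S j}`, where `σ_S : {0,…,s} → S` is the order-preserving bijection.  (For `S = ∅` it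
is `0`; this value is never used.) -/
noncomputable def cS {R : Type*} [CommRing R] (c : (s : ℕ) → Fin (s + 1) → R) {n : ℕ}
    (S : Finset (Fin (n + 1))) : Fin (n + 1) → R := fun l =>
  if h : l ∈ S then
    c (S.card - 1) ⟨((S.orderIsoOfFin rfl).symm ⟨l, h⟩ : Fin S.card), by
      have h1 : 0 < S.card := Finset.card_pos.mpr ⟨l, h⟩
      have h2 := ((S.orderIsoOfFin rfl).symm ⟨l, h⟩).isLt
      omega⟩
  else 0

/-- The subdivision map `sd_n^σ : R^{n+1} → R^{n+1}`, the linear map sending the vertex `e_k`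
to `c^n_{σ({0,…,k})}` for `0 ≤ k ≤ n`. -/
lemma ofVecs_single {R : Type*} [CommRing R] {a : ℕ} {M : Type*} [AddCommGroup M]
    [Module R M] (v : Fin a → M) (j : Fin a) :
    ofVecs v ((Pi.single j 1 : Fin a → R)) = v j := by
  simp [ofVecs, Pi.single_apply, ite_smul, Finset.sum_ite_eq']

lemma face_single {R : Type*} [CommRing R] {a : ℕ} (i : Fin (a + 1)) (j : Fin a) :
    face R a i (Pi.single j 1) = Pi.single (i.succAbove j) 1 :=
  ofVecs_single _ _

lemma face_apply_succAbove {R : Type*} [CommRing R] {a : ℕ} (i : Fin (a + 1))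
    (t : Fin a → R) (m : Fin a) : face R a i t (i.succAbove m) = t m := by
  simp [face, ofVecs, Pi.single_apply, Fin.succAbove_right_inj]

lemma face_apply_self {R : Type*} [CommRing R] {a : ℕ} (i : Fin (a + 1))
    (t : Fin a → R) : face R a i t i = 0 := by
  simp [face, ofVecs, Pi.single_apply, (Fin.succAbove_ne i _).symm]

lemma orderIso_symm_val {α : Type*} [LinearOrder α] (S : Finset α) {l : α} (h : l ∈ S) :
    (((S.orderIsoOfFin rfl).symm ⟨l, h⟩ : Fin S.card) : ℕ) = (S.filter (· < l)).card := by
  set f := S.orderEmbOfFin rfl with hf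
  set p := (S.orderIsoOfFin rfl).symm ⟨l, h⟩ with hp
  have hfp : f p = l := by
    have := (S.orderIsoOfFin rfl).apply_symm_apply ⟨l, h⟩
    have := congrArg Subtype.val this
    rwa [Finset.coe_orderIsoOfFin_apply] at this
  have himg : S.filter (· < l) = (Finset.Iio p).image f := by
    ext y
    simp only [Finset.mem_filter, Finset.mem_image, Finset.mem_Iio]
    constructor
    · rintro ⟨hyS, hyl⟩
      have : y ∈ Set.range f := by rw [hf, Finset.range_orderEmbOfFin]; exact hyS
      obtain ⟨q, hq⟩ := this
      exact ⟨q, by rw [← f.lt_iff_lt, hq, hfp]; exact hyl, hq⟩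
    · rintro ⟨q, hq, rfl⟩
      exact ⟨Finset.orderEmbOfFin_mem _ _ _, by rw [← hfp]; exact f.lt_iff_lt.mpr hq⟩
  rw [himg, Finset.card_image_of_injective _ f.injective, Fin.card_Iio]

lemma c_congr {R : Type*} [CommRing R] (c : (s : ℕ) → Fin (s + 1) → R) {a b : ℕ} (h : a = b)
    {i : Fin (a - 1 + 1)} {i' : Fin (b - 1 + 1)} (h2 : (i : ℕ) = (i' : ℕ)) :
    c (a - 1) i = c (b - 1) i' := by subst h; congr 1; exact Fin.ext h2

lemma cS_image {R : Type*} [CommRing R] (c : (s : ℕ) → Fin (s + 1) → R) {m m' : ℕ}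
    {e : Fin (m + 1) → Fin (m' + 1)} (he : StrictMono e) (S : Finset (Fin (m + 1)))
    (x : Fin (m + 1)) : cS c (S.image e) (e x) = cS c S x := by
  by_cases hx : x ∈ S
  · have hx' : e x ∈ S.image e := Finset.mem_image_of_mem e hx
    rw [cS, cS, dif_pos hx', dif_pos hx]
    apply c_congr c (Finset.card_image_of_injective S he.injective)
    rw [orderIso_symm_val, orderIso_symm_val]
    have hset : (S.image e).filter (· < e x) = (S.filter (· < x)).image e := by
      ext y
      simp only [Finset.mem_filter, Finset.mem_image]
      constructor
      · rintro ⟨⟨z, hz, rfl⟩, hlt⟩; exact ⟨z, ⟨hz, he.lt_iff_lt.mp hlt⟩, rfl⟩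
      · rintro ⟨z, ⟨hz, hlt⟩, rfl⟩; exact ⟨⟨z, hz, rfl⟩, he.lt_iff_lt.mpr hlt⟩
    rw [hset, Finset.card_image_of_injective _ he.injective]
  · rw [cS, cS, dif_neg hx, dif_neg]
    intro h
    obtain ⟨z, hz, hez⟩ := Finset.mem_image.mp h
    exact hx (he.injective hez ▸ hz)

lemma face_cS {R : Type*} [CommRing R] (c : (s : ℕ) → Fin (s + 1) → R) {m : ℕ}
    (i' : Fin (m + 2)) (S : Finset (Fin (m + 1))) :
    face R (m + 1) i' (cS c S) = cS c (S.image i'.succAbove) := by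
  funext l
  by_cases hl : l = i'
  · subst hl
    rw [face_apply_self, cS, dif_neg]
    simp only [Finset.mem_image, not_exists]
    intro z
    simp only [not_and]
    exact fun _ => Fin.succAbove_ne _ z
  · obtain ⟨m₀, rfl⟩ := Fin.exists_succAbove_eq hl
    rw [face_apply_succAbove, cS_image c (Fin.strictMono_succAbove i')]

noncomputable def sd (R : Type*) [CommRing R] (c : (s : ℕ) → Fin (s + 1) → R) (n : ℕ)
    (σ : Equiv.Perm (Fin (n + 1))) : (Fin (n + 1) → R) →ₗ[R] (Fin (n + 1) → R) :=
  ofVecs fun j => cS c ((Finset.Iic j).image σ)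

/-- The homotopy map `sd_{n,k}^σ : R^{n+2} → R^{n+1} × R^2` (for `0 ≤ k ≤ n` and a
permutation `σ` of `{0,…,k}`, acting on the subset `{0,…,k}` of `{0,…,n}`): the linear map
sending `e_j` to `(c^n_{σ({0,…,j})}, e_0)` for `0 ≤ j ≤ k` and `e_j` to `(e_{j-1}, e_1)` for
`k+1 ≤ j ≤ n+1`. -/
noncomputable def hsd (R : Type*) [CommRing R] (c : (s : ℕ) → Fin (s + 1) → R) (n k : ℕ)
    (hk : k ≤ n) (σ : Equiv.Perm (Fin (k + 1))) :
    (Fin (n + 2) → R) →ₗ[R] (Fin (n + 1) → R) × (Fin 2 → R) :=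
  ofVecs fun j =>
    if h : (j : ℕ) ≤ k then
      (cS c ((Finset.Iic (⟨(j : ℕ), by omega⟩ : Fin (k + 1))).image
          fun a => Fin.castLE (by omega : k + 1 ≤ n + 1) (σ a)), Pi.single 0 1)
    else
      (Pi.single (⟨(j : ℕ) - 1, by have := j.isLt; omega⟩ : Fin (n + 1)) 1, Pi.single 1 1)

lemma hsd_single (R : Type*) [CommRing R] (c : (s : ℕ) → Fin (s + 1) → R) (n k : ℕ)
    (hk : k ≤ n) (σ : Equiv.Perm (Fin (k + 1))) (j : Fin (n + 2)) :
    hsd R c n k hk σ (Pi.single j 1) =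
      if h : (j : ℕ) ≤ k then
        (cS c ((Finset.Iic (⟨(j : ℕ), by omega⟩ : Fin (k + 1))).image
            fun a => Fin.castLE (by omega : k + 1 ≤ n + 1) (σ a)), Pi.single 0 1)
      else
        (Pi.single (⟨(j : ℕ) - 1, by have := j.isLt; omega⟩ : Fin (n + 1)) 1, Pi.single 1 1) :=
  ofVecs_single _ _

set_option maxHeartbeats 2000000 in
/-- **Statement 11.** For all `n ≥ 1` (here written as `n+1`), `0 ≤ k ≤ n`, `k+1 < i ≤ n+1`,
and every permutation `σ` of `{0,…,k}`, one has
`sd_{n+1,k}^σ ∘ ∂_i = (∂_{i-1} × id_{R²}) ∘ sd_{n,k}^σ` as linear maps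
`R^{n+2} → R^{n+2} × R^2`, where `sd_{n,k}^σ` is the homotopy map in one dimension lower,
formed with respect to the same family of centers. -/
theorem stmt11 (R : Type*) [CommRing R] (n k i : ℕ) (hk : k ≤ n) (hi1 : k + 1 < i)
    (hi2 : i ≤ n + 1) (c : (s : ℕ) → Fin (s + 1) → R)
    (hc : ∀ s, s ≤ n + 1 → ∑ j, c s j = 1) (σ : Equiv.Perm (Fin (k + 1))) :
    (hsd R c (n + 1) k (by omega) σ).comp (face R (n + 2) ⟨i, by omega⟩) =
      (LinearMap.prodMap (face R (n + 1) ⟨i - 1, by omega⟩)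
        (LinearMap.id : (Fin 2 → R) →ₗ[R] (Fin 2 → R))).comp (hsd R c n k hk σ) := by
  refine Module.Basis.ext (Pi.basisFun R (Fin (n + 2))) fun j => ?_
  have hb : (Pi.basisFun R (Fin (n + 2))) j = Pi.single j 1 := by
    ext l; simp [Pi.basisFun_apply, Pi.single_apply, eq_comm]
  rw [hb, LinearMap.comp_apply, LinearMap.comp_apply, face_single]
  set ν := (⟨i, by omega⟩ : Fin (n + 3)).succAbove j with hν
  have hνv : (ν : ℕ) = if (j : ℕ) < i then (j : ℕ) else (j : ℕ) + 1 := by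
    rw [hν]
    unfold Fin.succAbove
    split <;> rename_i hcond <;>
      simp only [Fin.lt_def, Fin.coe_castSucc, Fin.val_succ] at hcond ⊢ <;> split <;> omega
  rw [hsd_single, hsd_single]
  by_cases hjk : (j : ℕ) ≤ k
  · have hji : (j : ℕ) < i := by omega
    have hνj : (ν : ℕ) = (j : ℕ) := by rw [hνv, if_pos hji]
    rw [dif_pos (show (ν : ℕ) ≤ k by omega), dif_pos hjk]
    have hidx : (⟨(ν : ℕ), by omega⟩ : Fin (k + 1)) = ⟨(j : ℕ), by omega⟩ := Fin.ext hνj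
    rw [hidx]
    ext l
    · simp only [LinearMap.prodMap_apply, Prod.map_fst]
      rw [face_cS, Finset.image_image]
      have hAB : ((Finset.Iic (⟨(j : ℕ), by omega⟩ : Fin (k + 1))).image
          ((⟨i - 1, by omega⟩ : Fin (n + 2)).succAbove ∘
            fun a => Fin.castLE (by omega : k + 1 ≤ n + 1) (σ a))) =
          (Finset.Iic (⟨(j : ℕ), by omega⟩ : Fin (k + 1))).image
            (fun a => Fin.castLE (by omega : k + 1 ≤ n + 2) (σ a)) := by
        apply Finset.image_congr
        intro a _
        have ha : (σ a : ℕ) < i - 1 := by have := (σ a).isLt; omega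
        simp only [Function.comp_apply]
        rw [Fin.succAbove_of_castSucc_lt _ _ (by simpa [Fin.lt_def] using ha)]
        rfl
      rw [hAB]
    · simp [LinearMap.prodMap_apply]
  · have hνk : ¬ (ν : ℕ) ≤ k := by rw [hνv]; split <;> omega
    rw [dif_neg hνk, dif_neg hjk]
    ext l
    · simp only [LinearMap.prodMap_apply, Prod.map_fst]
      rw [face_single]
      congr 1
      apply Fin.ext
      show (ν : ℕ) - 1 = (((⟨i - 1, by omega⟩ : Fin (n + 2)).succAbove
        ⟨(j : ℕ) - 1, by have := j.isLt; omega⟩ : Fin (n + 2)) : ℕ)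
      unfold Fin.succAbove
      rw [apply_ite Fin.val]
      simp only [Fin.coe_castSucc, Fin.val_succ, Fin.lt_def, hνv]
      split <;> split <;> omega
    · simp [LinearMap.prodMap_apply]
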